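/- Let ψ and ψ̃ be semiflows on metric spaces (X, d) and (X̃, d̃) with admissible functions τ and τ̃ respectively, and let h: X → X̃ be a finite-to-one, uniformly continuous, surjective map such that ψ̃_t ∘ h = h ∘ ψ_t for all t ≥ 0 and τ̃(h(x)) = τ(x) for all x ∈ X. Then h^τ_top(ψ) ≥ h^{τ̃}_top(ψ̃). -/

import Mathlib

open Set Filter Metric ENNReal

/-- A semiflow: `φ 0 = id` and `φ (t+s) = φ t ∘ φ s` for nonnegative times. -/
def IsSemiflow {X : Type*} (φ : ℝ → X → X) : Prop :=
  (∀ x, φ 0 x = x) ∧ ∀ s t : ℝ, 0 ≤ s → 0 ≤ t → ∀ x, φ (t + s) x = φ t (φ s x)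

/-- A continuous semiflow: jointly continuous on `[0,∞) × X`. -/
def IsContSemiflow {X : Type*} [MetricSpace X] (φ : ℝ → X → X) : Prop :=
  IsSemiflow φ ∧ ContinuousOn (fun p : ℝ × X => φ p.1 p.2) (Set.Ici (0:ℝ) ×ˢ Set.univ)

/-- `τ` is an admissible function for the semiflow `ψ`, with respect to `Z`, with constant `η`:
it assigns to each point a strictly increasing sequence of positive times, with `τ₁ ≥ η` on `Z`,
gaps at least `η`, and compatible with the time translation by the semiflow. -/
def IsAdmissible {X : Type*} (ψ : ℝ → X → X) (τ : X → ℕ → ℝ) (Z : Set X) (η : ℝ) : Prop :=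
  0 < η ∧ (∀ x, StrictMono (τ x)) ∧ (∀ x n, 0 < τ x n) ∧
  (∀ x ∈ Z, η ≤ τ x 0) ∧
  (∀ x n s, 0 ≤ s → s < τ x 0 → τ (ψ s x) n = τ x n - s) ∧
  (∀ x n, η ≤ τ x (n + 1) - τ x n)

/-- The set `J^τ_{T,δ}(x) = (0,T] ∖ ⋃_{j : τ_j(x) ≤ T} (τ_j(x)-δ, τ_j(x)+δ)`. -/
def Jset {X : Type*} (τ : X → ℕ → ℝ) (T δ : ℝ) (x : X) : Set ℝ :=
  Ioc 0 T \ ⋃ j ∈ {j | τ x j ≤ T}, Ioo (τ x j - δ) (τ x j + δ)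

/-- The `τ`-dynamical ball `B^τ(x, ψ, T, ε, δ)`. -/
def tBall {X : Type*} [MetricSpace X] (ψ : ℝ → X → X) (τ : X → ℕ → ℝ)
    (x : X) (T ε δ : ℝ) : Set X :=
  {y | ∀ t ∈ Jset τ T δ x, dist (ψ t x) (ψ t y) < ε}

/-- The classical dynamical ball `B(x, ψ, T, ε)`. -/
def dynBall {X : Type*} [MetricSpace X] (ψ : ℝ → X → X) (x : X) (T ε : ℝ) : Set X :=
  {y | ∀ t ∈ Icc 0 T, dist (ψ t x) (ψ t y) < ε}

/-- `E` is `(ψ, T, ε)`-separated. -/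
def IsSep {X : Type*} [MetricSpace X] (ψ : ℝ → X → X) (T ε : ℝ) (E : Set X) : Prop :=
  ∀ x ∈ E, ∀ y ∈ E, y ≠ x → y ∉ dynBall ψ x T ε

/-- `E` is `(ψ, τ, T, ε, δ)`-separated. -/
def IsTSep {X : Type*} [MetricSpace X] (ψ : ℝ → X → X) (τ : X → ℕ → ℝ)
    (T ε δ : ℝ) (E : Set X) : Prop :=
  ∀ x ∈ E, ∀ y ∈ E, y ≠ x → y ∉ tBall ψ τ x T ε δ

/-- Maximal cardinality of a `(ψ, T, ε)`-separated subset of `Y` (in `ℝ≥0∞`). -/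
noncomputable def sepNum {X : Type*} [MetricSpace X] (ψ : ℝ → X → X) (Y : Set X)
    (T ε : ℝ) : ℝ≥0∞ :=
  ⨆ (E : Finset X) (_ : ↑E ⊆ Y ∧ IsSep ψ T ε ↑E), (E.card : ℝ≥0∞)

/-- Supremum of cardinalities of finite `(ψ, τ, T, ε, δ)`-separated subsets of `Y`. -/
noncomputable def tSepNum {X : Type*} [MetricSpace X] (ψ : ℝ → X → X) (τ : X → ℕ → ℝ)
    (Y : Set X) (T ε δ : ℝ) : ℝ≥0∞ :=
  ⨆ (E : Finset X) (_ : ↑E ⊆ Y ∧ IsTSep ψ τ T ε δ ↑E), (E.card : ℝ≥0∞)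

/-- Exponential growth rate `limsup_{T→∞} (1/T) log f(T)`, with `log ∞ = ∞`. -/
noncomputable def growthRate (f : ℝ → ℝ≥0∞) : EReal :=
  limsup (fun T : ℝ => ENNReal.log (f T) / (T : EReal)) atTop

/-- The classical topological entropy of `ψ` on `Y`
(the limit as `ε → 0⁺` is a supremum over `ε > 0` by monotonicity). -/
noncomputable def htop {X : Type*} [MetricSpace X] (ψ : ℝ → X → X) (Y : Set X) : EReal :=
  ⨆ (ε : ℝ) (_ : 0 < ε), growthRate fun T => sepNum ψ Y T ε

/-- The `τ`-topological entropy of `ψ` on `Y`, for an admissible function with constant `η`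
(the limits as `δ → 0⁺` and `ε → 0⁺` are suprema by monotonicity). -/
noncomputable def tHtop {X : Type*} [MetricSpace X] (ψ : ℝ → X → X) (τ : X → ℕ → ℝ)
    (Y : Set X) (η : ℝ) : EReal :=
  ⨆ (δ : ℝ) (_ : 0 < δ) (_ : δ < η / 2) (ε : ℝ) (_ : 0 < ε),
    growthRate fun T => tSepNum ψ τ Y T ε δ

theorem Jset_congr {X Y : Type*} {τ : X → ℕ → ℝ} {τt : Y → ℕ → ℝ} {x : X} {y : Y}
    (hxy : τt y = τ x) (T δ : ℝ) : Jset τt T δ y = Jset τ T δ x := by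
  simp only [Jset, hxy]

theorem growthRate_mono {f g : ℝ → ℝ≥0∞} (hfg : ∀ T, f T ≤ g T) :
    growthRate f ≤ growthRate g :=
  limsup_le_limsup (eventually_atTop.mpr ⟨0, fun T hT =>
    EReal.div_le_div_right_of_nonneg (by exact_mod_cast hT) (ENNReal.log_monotone (hfg T))⟩)

section Semiconjugacy

variable {X Y : Type*} [MetricSpace X] [MetricSpace Y] {ψ : ℝ → X → X} {ψt : ℝ → Y → Y}
  {τ : X → ℕ → ℝ} {τt : Y → ℕ → ℝ} {h : X → Y} {T ε ε' δ : ℝ}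

theorem mapsTo_tBall (hconj : ∀ t : ℝ, 0 ≤ t → ∀ x : X, ψt t (h x) = h (ψ t x))
    (htau : ∀ x : X, τt (h x) = τ x) (hmod : ∀ ⦃a b : X⦄, dist a b < ε' → dist (h a) (h b) < ε)
    (x : X) : MapsTo h (tBall ψ τ x T ε' δ) (tBall ψt τt (h x) T ε δ) := by
  intro y hy t ht
  rw [Jset_congr (htau x)] at ht
  rw [hconj t ht.1.1.le, hconj t ht.1.1.le]
  exact hmod (hy t ht)

theorem IsTSep.of_image (hconj : ∀ t : ℝ, 0 ≤ t → ∀ x : X, ψt t (h x) = h (ψ t x))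
    (htau : ∀ x : X, τt (h x) = τ x) (hmod : ∀ ⦃a b : X⦄, dist a b < ε' → dist (h a) (h b) < ε)
    {E : Set X} (hinj : InjOn h E) (hsep : IsTSep ψt τt T ε δ (h '' E)) :
    IsTSep ψ τ T ε' δ E := fun x hx y hy hne hball =>
  hsep (h x) (mem_image_of_mem h hx) (h y) (mem_image_of_mem h hy) (hinj.ne hy hx hne)
    (mapsTo_tBall hconj htau hmod x hball)

/-- A section of `h` carries separated sets of the factor injectively to separated sets, since
uniform continuity of `h` turns `ε'`-closeness upstairs into `ε`-closeness downstairs. -/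
theorem tSepNum_le_of_semiconj (hsurj : Function.Surjective h)
    (hconj : ∀ t : ℝ, 0 ≤ t → ∀ x : X, ψt t (h x) = h (ψ t x))
    (htau : ∀ x : X, τt (h x) = τ x) (hmod : ∀ ⦃a b : X⦄, dist a b < ε' → dist (h a) (h b) < ε)
    (S : Set Y) : tSepNum ψt τt S T ε δ ≤ tSepNum ψ τ (h ⁻¹' S) T ε' δ := by
  classical
  refine iSup₂_le fun F ⟨hFS, hsep⟩ => ?_
  set g := Function.surjInv hsurj
  have hhg : ∀ y, h (g y) = y := Function.surjInv_eq hsurj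
  have himage : h '' ↑(F.image g) = ↑F := by
    simp [image_image, hhg]
  have hinj : InjOn h ↑(F.image g) := by
    rintro _ ha _ hb hab
    obtain ⟨a, -, rfl⟩ := Finset.mem_image.mp ha
    obtain ⟨b, -, rfl⟩ := Finset.mem_image.mp hb
    rw [hhg, hhg] at hab
    rw [hab]
  have hsub : ↑(F.image g) ⊆ h ⁻¹' S := by
    rw [← image_subset_iff, himage]
    exact hFS
  rw [← himage] at hsep
  rw [← Finset.card_image_of_injective F (Function.injective_surjInv hsurj)]
  exact le_iSup₂_of_le (F.image g) ⟨hsub, hsep.of_image hconj htau hmod hinj⟩ le_rfl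

end Semiconjugacy

theorem tHtop_le_of_semiconjugacy_general {X Y : Type*} [MetricSpace X] [MetricSpace Y]
    (ψ : ℝ → X → X) (ψt : ℝ → Y → Y)
    (τ : X → ℕ → ℝ) (τt : Y → ℕ → ℝ) (η : ℝ)
    (h : X → Y) (hsurj : Function.Surjective h) (hUC : UniformContinuous h)
    (hconj : ∀ t : ℝ, 0 ≤ t → ∀ x : X, ψt t (h x) = h (ψ t x))
    (htau : ∀ x : X, ∀ n : ℕ, τt (h x) n = τ x n) :
    tHtop ψ τ Set.univ η ≥ tHtop ψt τt Set.univ η := by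
  refine iSup₂_le fun δ hδ => iSup_le fun hδη => iSup₂_le fun ε hε => ?_
  obtain ⟨ε', hε', hmod⟩ := Metric.uniformContinuous_iff.mp hUC ε hε
  calc growthRate (fun T => tSepNum ψt τt univ T ε δ)
      ≤ growthRate (fun T => tSepNum ψ τ univ T ε' δ) := growthRate_mono fun T => by
        simpa only [preimage_univ] using
          tSepNum_le_of_semiconj hsurj hconj (fun x => funext (htau x)) hmod univ
    _ ≤ tHtop ψ τ univ η := le_iSup₂_of_le δ hδ <| le_iSup_of_le hδη <| le_iSup₂_of_le ε' hε' le_rfl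

/-- A finite-to-one `(τ, τ̃)`-semiconjugacy does not increase the `τ`-topological entropy. -/
theorem tHtop_le_of_semiconjugacy {X Y : Type*} [MetricSpace X] [MetricSpace Y]
    (ψ : ℝ → X → X) (ψt : ℝ → Y → Y) (hψ : IsSemiflow ψ) (hψt : IsSemiflow ψt)
    (τ : X → ℕ → ℝ) (τt : Y → ℕ → ℝ) (Z : Set X) (Zt : Set Y) (η : ℝ)
    (hτ : IsAdmissible ψ τ Z η) (hτt : IsAdmissible ψt τt Zt η)
    (h : X → Y) (hsurj : Function.Surjective h) (hUC : UniformContinuous h)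
    (hfin : ∀ y : Y, (h ⁻¹' {y}).Finite)
    (hconj : ∀ t : ℝ, 0 ≤ t → ∀ x : X, ψt t (h x) = h (ψ t x))
    (htau : ∀ x : X, ∀ n : ℕ, τt (h x) n = τ x n) :
    tHtop ψ τ Set.univ η ≥ tHtop ψt τt Set.univ η :=
  tHtop_le_of_semiconjugacy_general ψ ψt τ τt η h hsurj hUC hconj htau
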